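/- For every w ∈ W and every λ ∈ V_ℂ such that α̂(λ) ≠ 0 and ρ(α̂(λ)) ≠ 0 for every coroot α̂ ∈ R̂, the following identity holds: c(wλ) · r(wλ)/r(λ) = ∏_{α̂ ∈ R̂(w)} (α̂(λ) − 1)/α̂(λ) · ∏_{β̂ ∈ R̂_+ ∖ R̂(w)} (β̂(λ) + 1)/β̂(λ) · ∏_{γ̂ ∈ R̂(w)} ρ(γ̂(λ) + 1)/ρ(γ̂(λ)). -/

import Mathlib

open scoped RealInnerProductSpace Classical

/-- A reduced crystallographic root system in `V = EuclideanSpace ℝ (Fin n)`, with a fixed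
positive system.  `W` acts on `V`, hence on coroots, and is extended complex-linearly to
the complexification `V_ℂ = Fin n → ℂ`. -/
structure RootData (n : ℕ) where
  roots : Finset (EuclideanSpace ℝ (Fin n))
  pos : Finset (EuclideanSpace ℝ (Fin n))
  pos_subset : pos ⊆ roots
  ne_zero : ∀ a ∈ roots, a ≠ 0
  union_eq : roots = pos ∪ pos.image (fun a => -a)
  pos_neg_disj : ∀ a ∈ pos, -a ∉ pos
  reduced : ∀ a ∈ roots, ∀ t : ℝ, t • a ∈ roots → t = 1 ∨ t = -1
  crystallographic : ∀ a ∈ roots, ∀ b ∈ roots, ∃ k : ℤ, 2 * ⟪a, b⟫ / ⟪a, a⟫ = (k : ℝ)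
  refl_mem : ∀ a ∈ roots, ∀ b ∈ roots, b - (2 * ⟪a, b⟫ / ⟪a, a⟫) • a ∈ roots

namespace RootData

variable {n : ℕ}

/-- The Weyl group `W`, generated by the orthogonal reflections in the roots. -/
noncomputable def weyl (S : RootData n) :
    Subgroup (EuclideanSpace ℝ (Fin n) ≃ₗ[ℝ] EuclideanSpace ℝ (Fin n)) :=
  Subgroup.closure {g | ∃ a ∈ S.roots, ∀ v, g v = v - (2 * ⟪a, v⟫ / ⟪a, a⟫) • a}

/-- The coroot `α̂ := 2α/(α,α)` of a root `α`. -/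
noncomputable def co (a : EuclideanSpace ℝ (Fin n)) : EuclideanSpace ℝ (Fin n) :=
  (2 / ⟪a, a⟫) • a

/-- Evaluation of a coroot (as a linear functional via the inner product), extended
`ℂ`-linearly to the complexification `V_ℂ = Fin n → ℂ`. -/
noncomputable def ev (a : EuclideanSpace ℝ (Fin n)) (l : Fin n → ℂ) : ℂ :=
  ∑ i, (a i : ℂ) * l i

/-- The `ℂ`-linear extension of `w : V ≃ₗ[ℝ] V` to the complexification `V_ℂ`. -/
noncomputable def cpx (w : EuclideanSpace ℝ (Fin n) ≃ₗ[ℝ] EuclideanSpace ℝ (Fin n))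
    (l : Fin n → ℂ) : Fin n → ℂ :=
  fun i => ∑ j, ((w (EuclideanSpace.single j 1)) i : ℂ) * l j

/-- The inversion set `R̂(w) = {α̂ ∈ R̂₊ : w(α̂) ∈ R̂₋}` (indexed by the positive roots
`α` with `w(α)` negative, which correspond bijectively to the coroots in question). -/
noncomputable def invSet (S : RootData n)
    (w : EuclideanSpace ℝ (Fin n) ≃ₗ[ℝ] EuclideanSpace ℝ (Fin n)) :
    Finset (EuclideanSpace ℝ (Fin n)) :=
  S.pos.filter fun a => w a ∈ S.pos.image (fun b => -b)

/-- `c(λ) := ∏_{α ∈ R₊} (α̂(λ) + 1)/α̂(λ)`. -/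
noncomputable def cfun (S : RootData n) (l : Fin n → ℂ) : ℂ :=
  ∏ a ∈ S.pos, (ev (co a) l + 1) / ev (co a) l

/-- `r(λ) := ∏_{α ∈ R₊} ρ(α̂(λ))`. -/
noncomputable def rfun (S : RootData n) (ρ : ℂ → ℂ) (l : Fin n → ℂ) : ℂ :=
  ∏ a ∈ S.pos, ρ (ev (co a) l)

end RootData

open RootData

/-!
Every `w ∈ W` is orthogonal and permutes the roots, so `α̂(wλ) = (w⁻¹α)^(λ)`, and as `α` runs
over `R₊` the root `w⁻¹α` runs over `R₊ ∖ R̂(w)` together with the negatives of `R̂(w)`.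
Thus a product over `R₊` evaluated at `wλ` is the same product at `λ` with the factors from
`R̂(w)` taken at `-α̂(λ)` instead of `α̂(λ)`. Now `(1 - x)/(-x) = (x - 1)/x`,
`ρ(-x) = ρ(1 + x)` by the functional equation, and the factors `ρ(β̂(λ))`, `β ∉ R̂(w)`, cancel
in `r(wλ)/r(λ)`.
-/

namespace RootData

section Reflection

variable {E : Type*} [NormedAddCommGroup E] [InnerProductSpace ℝ E]

noncomputable def rootReflection (a v : E) : E := v - (2 * ⟪a, v⟫ / ⟪a, a⟫) • a

lemma inner_rootReflection_rootReflection {a : E} (ha : a ≠ 0) (u v : E) :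
    ⟪rootReflection a u, rootReflection a v⟫ = ⟪u, v⟫ := by
  have haa : ⟪a, a⟫ ≠ 0 := inner_self_ne_zero.mpr ha
  simp only [rootReflection, inner_sub_left, inner_sub_right, real_inner_smul_left,
    real_inner_smul_right, real_inner_comm a u]
  field_simp
  ring

lemma rootReflection_rootReflection {a : E} (ha : a ≠ 0) (v : E) :
    rootReflection a (rootReflection a v) = v := by
  have haa : ⟪a, a⟫ ≠ 0 := inner_self_ne_zero.mpr ha
  have hinner : ⟪a, rootReflection a v⟫ = -⟪a, v⟫ := by
    simp only [rootReflection, inner_sub_right, real_inner_smul_right]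
    field_simp
    ring
  rw [rootReflection, hinner, rootReflection]
  module

end Reflection

variable {n : ℕ}

noncomputable def rootIsometries (S : RootData n) :
    Subgroup (EuclideanSpace ℝ (Fin n) ≃ₗ[ℝ] EuclideanSpace ℝ (Fin n)) where
  carrier := {g | (∀ u v, ⟪g u, g v⟫ = ⟪u, v⟫) ∧ ∀ a, g a ∈ S.roots ↔ a ∈ S.roots}
  mul_mem' := fun ⟨hx, hx'⟩ ⟨hy, hy'⟩ =>
    ⟨fun u v => (hx _ _).trans (hy u v), fun a => (hx' _).trans (hy' a)⟩
  one_mem' := ⟨fun _ _ => rfl, fun _ => Iff.rfl⟩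
  inv_mem' := by
    rintro x ⟨hx, hx'⟩
    refine ⟨fun u v => ?_, fun a => ?_⟩
    · rw [← hx, LinearEquiv.coe_inv, x.apply_symm_apply, x.apply_symm_apply]
    · rw [← hx', LinearEquiv.coe_inv, x.apply_symm_apply]

lemma weyl_le_rootIsometries (S : RootData n) : S.weyl ≤ S.rootIsometries := by
  refine (Subgroup.closure_le _).mpr ?_
  rintro g ⟨a, ha, hg⟩
  have hg' : ∀ v, g v = rootReflection a v := hg
  have ha0 := S.ne_zero a ha
  refine ⟨fun u v => by rw [hg', hg', inner_rootReflection_rootReflection ha0], fun b => ?_⟩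
  refine ⟨fun hb => ?_, fun hb => hg' b ▸ S.refl_mem a ha b hb⟩
  simpa only [← hg, hg', rootReflection_rootReflection ha0] using S.refl_mem a ha (g b) hb

lemma ev_cpx {w : EuclideanSpace ℝ (Fin n) ≃ₗ[ℝ] EuclideanSpace ℝ (Fin n)}
    {w' : EuclideanSpace ℝ (Fin n) → EuclideanSpace ℝ (Fin n)}
    (hadj : ∀ u v, ⟪w u, v⟫ = ⟪u, w' v⟫) (b : EuclideanSpace ℝ (Fin n)) (l : Fin n → ℂ) :
    ev b (cpx w l) = ev (w' b) l := by
  have hcoord (j : Fin n) : ∑ i, b i * w (EuclideanSpace.single j 1) i = w' b j := by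
    have := hadj (EuclideanSpace.single j 1) b
    rw [EuclideanSpace.inner_single_left, PiLp.inner_apply] at this
    simpa [mul_comm] using this
  simp only [ev, cpx, Finset.mul_sum]
  rw [Finset.sum_comm]
  refine Finset.sum_congr rfl fun j _ => ?_
  rw [← hcoord j]
  push_cast
  rw [Finset.sum_mul]
  exact Finset.sum_congr rfl fun i _ => by ring

lemma inner_apply_eq_inner_inv_apply {w : EuclideanSpace ℝ (Fin n) ≃ₗ[ℝ] EuclideanSpace ℝ (Fin n)}
    (hw : ∀ u v, ⟪w u, w v⟫ = ⟪u, v⟫) (u v : EuclideanSpace ℝ (Fin n)) :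
    ⟪w u, v⟫ = ⟪u, w⁻¹ v⟫ := by
  rw [← hw u, LinearEquiv.coe_inv, w.apply_symm_apply]

lemma map_co {g : EuclideanSpace ℝ (Fin n) ≃ₗ[ℝ] EuclideanSpace ℝ (Fin n)}
    (hg : ∀ u v, ⟪g u, g v⟫ = ⟪u, v⟫) (a : EuclideanSpace ℝ (Fin n)) : g (co a) = co (g a) := by
  rw [co, co, map_smul, hg]

lemma ev_co_cpx {S : RootData n} {w : EuclideanSpace ℝ (Fin n) ≃ₗ[ℝ] EuclideanSpace ℝ (Fin n)}
    (hw : w ∈ S.rootIsometries) (a : EuclideanSpace ℝ (Fin n)) (l : Fin n → ℂ) :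
    ev (co a) (cpx w l) = ev (co (w⁻¹ a)) l := by
  rw [ev_cpx (inner_apply_eq_inner_inv_apply hw.1), map_co (S.rootIsometries.inv_mem hw).1]

lemma ev_neg (a : EuclideanSpace ℝ (Fin n)) (l : Fin n → ℂ) : ev (-a) l = -ev a l := by
  simp [ev, ← Finset.sum_neg_distrib]

lemma co_neg (a : EuclideanSpace ℝ (Fin n)) : co (-a) = -co a := by
  simp [co]

lemma mem_invSet {S : RootData n} {w : EuclideanSpace ℝ (Fin n) ≃ₗ[ℝ] EuclideanSpace ℝ (Fin n)}
    {a : EuclideanSpace ℝ (Fin n)} : a ∈ invSet S w ↔ a ∈ S.pos ∧ -w a ∈ S.pos := by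
  simp [invSet, neg_eq_iff_eq_neg]

lemma mem_pos_or_neg_mem_pos (S : RootData n) {a : EuclideanSpace ℝ (Fin n)}
    (ha : a ∈ S.roots) : a ∈ S.pos ∨ -a ∈ S.pos := by
  rw [S.union_eq, Finset.mem_union, Finset.mem_image] at ha
  rcases ha with h | ⟨b, hb, rfl⟩
  · exact Or.inl h
  · exact Or.inr ((neg_neg b).symm ▸ hb)

/-- A root permutation `g` sends the positive roots `a` with `-g⁻¹ a` positive onto the
inversion set of `g` via `a ↦ -g⁻¹ a`, and the remaining ones onto its complement via
`a ↦ g⁻¹ a`. -/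
lemma prod_pos_comp_inv {M : Type*} [CommMonoid M] (S : RootData n)
    {g : EuclideanSpace ℝ (Fin n) ≃ₗ[ℝ] EuclideanSpace ℝ (Fin n)}
    (hg : ∀ a, g a ∈ S.roots ↔ a ∈ S.roots) (f : EuclideanSpace ℝ (Fin n) → M) :
    ∏ a ∈ S.pos, f (g⁻¹ a) = (∏ a ∈ invSet S g, f (-a)) * ∏ a ∈ S.pos \ invSet S g, f a := by
  have hgg (v) : g (g⁻¹ v) = v := g.apply_symm_apply v
  have hgg' (v) : g⁻¹ (g v) = v := g.symm_apply_apply v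
  rw [← Finset.prod_filter_mul_prod_filter_not S.pos (fun a => -g⁻¹ a ∈ S.pos)]
  congr 1
  · refine Finset.prod_nbij' (fun a => -g⁻¹ a) (fun b => -g b) ?_ ?_ ?_ ?_ ?_
    · intro a ha
      simp_all [mem_invSet]
    · intro b hb
      simp_all [mem_invSet]
    · intro a _; simp
    · intro b _; simp
    · intro a _; simp
  · refine Finset.prod_nbij' (fun a => g⁻¹ a) (fun b => g b) ?_ ?_ ?_ ?_ ?_
    · intro a ha
      rw [Finset.mem_filter] at ha
      have hr : g⁻¹ a ∈ S.roots := (hg _).mp ((hgg a).symm ▸ S.pos_subset ha.1)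
      rw [Finset.mem_sdiff, mem_invSet, hgg]
      exact ⟨(S.mem_pos_or_neg_mem_pos hr).resolve_right ha.2, fun h => S.pos_neg_disj a ha.1 h.2⟩
    · intro b hb
      rw [Finset.mem_sdiff, mem_invSet, not_and] at hb
      have hr : g b ∈ S.roots := (hg b).mpr (S.pos_subset hb.1)
      rw [Finset.mem_filter, hgg']
      exact ⟨(S.mem_pos_or_neg_mem_pos hr).resolve_right (hb.2 hb.1), S.pos_neg_disj b hb.1⟩
    · intro a _; simp
    · intro b _; simp
    · intro a _; rfl

lemma prod_pos_ev_co_cpx {M : Type*} [CommMonoid M] {S : RootData n}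
    {w : EuclideanSpace ℝ (Fin n) ≃ₗ[ℝ] EuclideanSpace ℝ (Fin n)} (hw : w ∈ S.rootIsometries)
    (l : Fin n → ℂ) (F : ℂ → M) :
    ∏ a ∈ S.pos, F (ev (co a) (cpx w l)) =
      (∏ a ∈ invSet S w, F (-ev (co a) l)) * ∏ a ∈ S.pos \ invSet S w, F (ev (co a) l) := by
  simp only [ev_co_cpx hw]
  simpa only [co_neg, ev_neg] using S.prod_pos_comp_inv hw.2 (fun a => F (ev (co a) l))

end RootData

theorem statement9_general (n : ℕ) (S : RootData n) (ρ : ℂ → ℂ) (hρ : ∀ s : ℂ, ρ s = ρ (1 - s))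
    (w : EuclideanSpace ℝ (Fin n) ≃ₗ[ℝ] EuclideanSpace ℝ (Fin n)) (hw : w ∈ S.weyl)
    (l : Fin n → ℂ)
    (hρ0 : ∀ a ∈ S.roots, ρ (ev (co a) l) ≠ 0) :
    cfun S (cpx w l) * (rfun S ρ (cpx w l) / rfun S ρ l) =
      (∏ a ∈ invSet S w, (ev (co a) l - 1) / ev (co a) l) *
      (∏ a ∈ S.pos \ invSet S w, (ev (co a) l + 1) / ev (co a) l) *
      (∏ a ∈ invSet S w, ρ (ev (co a) l + 1) / ρ (ev (co a) l)) := by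
  have hw' := S.weyl_le_rootIsometries hw
  have hc : cfun S (cpx w l) =
      (∏ a ∈ invSet S w, (ev (co a) l - 1) / ev (co a) l) *
        ∏ a ∈ S.pos \ invSet S w, (ev (co a) l + 1) / ev (co a) l := by
    rw [cfun, prod_pos_ev_co_cpx hw' l fun t => (t + 1) / t]
    congr 1
    exact Finset.prod_congr rfl fun a _ => by ring
  have hr : rfun S ρ (cpx w l) =
      (∏ a ∈ invSet S w, ρ (ev (co a) l + 1)) * ∏ a ∈ S.pos \ invSet S w, ρ (ev (co a) l) := by
    rw [rfun, prod_pos_ev_co_cpx hw' l ρ]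
    congr 1
    exact Finset.prod_congr rfl fun a _ => by rw [hρ, sub_neg_eq_add, add_comm]
  have hne : ∏ a ∈ S.pos \ invSet S w, ρ (ev (co a) l) ≠ 0 :=
    Finset.prod_ne_zero_iff.mpr fun a ha => hρ0 a (S.pos_subset (Finset.mem_sdiff.mp ha).1)
  have hl : rfun S ρ l =
      (∏ a ∈ S.pos \ invSet S w, ρ (ev (co a) l)) * ∏ a ∈ invSet S w, ρ (ev (co a) l) :=
    (Finset.prod_sdiff (Finset.filter_subset _ _)).symm
  rw [hc, hr, hl, mul_comm (∏ a ∈ invSet S w, ρ (ev (co a) l + 1)), mul_div_mul_left _ _ hne,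
    ← Finset.prod_div_distrib]

/-- for every `w ∈ W` and every `λ ∈ V_ℂ` such that `α̂(λ) ≠ 0` and
`ρ(α̂(λ)) ≠ 0` for every coroot `α̂ ∈ R̂`, one has
`c(wλ)·r(wλ)/r(λ) = ∏_{α̂ ∈ R̂(w)} (α̂(λ)−1)/α̂(λ) · ∏_{β̂ ∈ R̂₊∖R̂(w)} (β̂(λ)+1)/β̂(λ)
  · ∏_{γ̂ ∈ R̂(w)} ρ(γ̂(λ)+1)/ρ(γ̂(λ))`. -/
theorem statement9 (n : ℕ) (S : RootData n) (ρ : ℂ → ℂ) (hρ : ∀ s : ℂ, ρ s = ρ (1 - s))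
    (w : EuclideanSpace ℝ (Fin n) ≃ₗ[ℝ] EuclideanSpace ℝ (Fin n)) (hw : w ∈ S.weyl)
    (l : Fin n → ℂ)
    (h0 : ∀ a ∈ S.roots, ev (co a) l ≠ 0)
    (hρ0 : ∀ a ∈ S.roots, ρ (ev (co a) l) ≠ 0) :
    cfun S (cpx w l) * (rfun S ρ (cpx w l) / rfun S ρ l) =
      (∏ a ∈ invSet S w, (ev (co a) l - 1) / ev (co a) l) *
      (∏ a ∈ S.pos \ invSet S w, (ev (co a) l + 1) / ev (co a) l) *
      (∏ a ∈ invSet S w, ρ (ev (co a) l + 1) / ρ (ev (co a) l)) :=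
  statement9_general n S ρ hρ w hw l hρ0
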